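/- For every natural number n ≥ 1, the quantity Δ_n := 6/5 - (1/(H_n - (1/2)ln(n(n+1)) - γ) - 6n(n+1)) satisfies 0 < Δ_n < 38/(175 n(n+1)). -/

import Mathlib

open Real Filter

noncomputable def H (n : ℕ) : ℝ := ∑ i ∈ Finset.range n, (1 : ℝ) / (i + 1)

open Finset Topology

/-! The defect `f n = H n - ½ log (n (n + 1)) - γ` tends to `0`, and
`f n - f (n + 1) = artanh (1 / (n + 1)) - 1 / (n + 1)`. Bounding `artanh` by its Taylor polynomial
of degree 13 plus or minus Mathlib's remainder estimate for the logarithm series, one checks that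
`f n - f (n + 1)` lies strictly between the consecutive differences of `L t = (6 t + 6/5)⁻¹` and
`U t = (6 t + 6/5 - 38 / (175 t))⁻¹` at `t = n (n + 1)`; after clearing denominators this is the
positivity of two polynomials in `n - 1` with positive coefficients. So `f - L` and `U - f`
decrease strictly to `0`, hence are positive, and inverting `L < f < U` gives both bounds. -/

noncomputable def harmonicDefect (n : ℕ) : ℝ :=
  H n - (1 / 2) * log (n * (n + 1)) - eulerMascheroniConstant

noncomputable def lowerApprox (t : ℝ) : ℝ := (6 * t + 6 / 5)⁻¹

noncomputable def upperApprox (t : ℝ) : ℝ := (6 * t + 6 / 5 - 38 / (175 * t))⁻¹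

lemma H_eq_harmonic (n : ℕ) : H n = harmonic n := by
  simp [H, harmonic, one_div]

lemma tendsto_harmonicDefect : Tendsto harmonicDefect atTop (𝓝 0) := by
  have h := ((tendsto_harmonic_sub_log.add tendsto_harmonic_sub_log_add_one).const_mul
    (1 / 2 : ℝ)).sub_const eulerMascheroniConstant
  rw [show (1 / 2 : ℝ) * (eulerMascheroniConstant + eulerMascheroniConstant)
    - eulerMascheroniConstant = 0 by ring] at h
  refine h.congr' ?_
  filter_upwards [eventually_ge_atTop 1] with n hn
  have hn' : (1 : ℝ) ≤ n := by exact_mod_cast hn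
  rw [harmonicDefect, H_eq_harmonic, log_mul (by positivity) (by positivity)]
  ring

lemma harmonicDefect_sub_succ {n : ℕ} (hn : 1 ≤ n) :
    harmonicDefect n - harmonicDefect (n + 1)
      = (1 / 2) * (log (1 + 1 / (n + 1)) - log (1 - 1 / (n + 1))) - 1 / (n + 1) := by
  have hn' : (1 : ℝ) ≤ n := by exact_mod_cast hn
  have hplus : (1 : ℝ) + 1 / (n + 1) = (n + 2) / (n + 1) := by field_simp; ring
  have hminus : (1 : ℝ) - 1 / (n + 1) = n / (n + 1) := by field_simp; ring
  rw [hplus, hminus, log_div (by positivity) (by positivity),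
    log_div (by positivity) (by positivity)]
  simp only [harmonicDefect, H, sum_range_succ]
  push_cast
  rw [log_mul (by positivity) (by positivity), show (n : ℝ) + 1 + 1 = n + 2 by ring,
    log_mul (by positivity) (by positivity)]
  ring

lemma sum_range_two_mul_pow_sub_neg_pow (x : ℝ) (N : ℕ) :
    ∑ i ∈ range (2 * N), (x ^ (i + 1) - (-x) ^ (i + 1)) / (i + 1)
      = 2 * ∑ k ∈ range N, x ^ (2 * k + 1) / (2 * k + 1) := by
  induction N with
  | zero => simp
  | succ N ih =>
    rw [show 2 * (N + 1) = 2 * N + 1 + 1 by ring, sum_range_succ, sum_range_succ, ih,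
      sum_range_succ, Odd.neg_pow ⟨N, rfl⟩, Even.neg_pow ⟨N + 1, by ring⟩]
    push_cast
    ring

lemma abs_half_log_sub_log_sub_sum_le {x : ℝ} (hx : |x| < 1) (N : ℕ) :
    |(1 / 2) * (log (1 + x) - log (1 - x)) - ∑ k ∈ range N, x ^ (2 * k + 1) / (2 * k + 1)|
      ≤ |x| ^ (2 * N + 1) / (1 - |x|) := by
  have hA := abs_log_sub_add_sum_range_le hx (2 * N)
  have hB := abs_log_sub_add_sum_range_le (x := -x) (by rwa [abs_neg]) (2 * N)
  rw [abs_neg, sub_neg_eq_add] at hB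
  have hsplit :
      (1 / 2) * (log (1 + x) - log (1 - x)) - ∑ k ∈ range N, x ^ (2 * k + 1) / (2 * k + 1)
      = (1 / 2) * ((∑ i ∈ range (2 * N), (-x) ^ (i + 1) / (i + 1)) + log (1 + x))
        - (1 / 2) * ((∑ i ∈ range (2 * N), x ^ (i + 1) / (i + 1)) + log (1 - x)) := by
    have h := sum_range_two_mul_pow_sub_neg_pow x N
    simp only [sub_div, sum_sub_distrib] at h
    linear_combination (1 / 2 : ℝ) * h
  rw [hsplit]
  refine (abs_sub _ _).trans ?_
  rw [abs_mul, abs_mul, abs_of_pos one_half_pos]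
  linarith

lemma abs_harmonicDefect_sub_succ_sub_sum_le {n : ℕ} (hn : 1 ≤ n) :
    |harmonicDefect n - harmonicDefect (n + 1)
        - (∑ k ∈ range 7, (1 / ((n : ℝ) + 1)) ^ (2 * k + 1) / (2 * k + 1) - 1 / (n + 1))|
      ≤ (1 / ((n : ℝ) + 1)) ^ 15 / (1 - 1 / (n + 1)) := by
  have hx : |1 / ((n : ℝ) + 1)| = 1 / ((n : ℝ) + 1) := abs_of_pos (by positivity)
  have h := abs_half_log_sub_log_sub_sum_le (N := 7) (hx.trans_lt (by
    rw [div_lt_one (by positivity)]; exact_mod_cast Nat.lt_add_of_pos_left hn))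
  rw [hx] at h
  rw [harmonicDefect_sub_succ hn]
  convert h using 2
  ring

lemma upperApprox_eq {t : ℝ} (ht : t ≠ 0) :
    upperApprox t = 175 * t / (1050 * t ^ 2 + 210 * t - 38) := by
  rw [upperApprox, inv_eq_iff_eq_inv, inv_div]
  field_simp
  ring

lemma lowerApprox_sub_lt {y : ℝ} (hy : 1 ≤ y) :
    lowerApprox (y * (y + 1)) - lowerApprox ((y + 1) * (y + 2))
      < ∑ k ∈ range 7, (1 / (y + 1)) ^ (2 * k + 1) / (2 * k + 1) - 1 / (y + 1)
        - (1 / (y + 1)) ^ 15 / (1 - 1 / (y + 1)) := by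
  obtain ⟨s, hs, rfl⟩ : ∃ s, 0 ≤ s ∧ y = s + 1 := ⟨y - 1, by linarith, by ring⟩
  have hN : (0 : ℝ) < 3321728388 + 22930967484 * s + 67755053808 * s ^ 2 + 118097359776 * s ^ 3
      + 137717334612 * s ^ 4 + 113997818412 * s ^ 5 + 68831819532 * s ^ 6 + 30560518404 * s ^ 7
      + 9903938148 * s ^ 8 + 2285181756 * s ^ 9 + 356411484 * s ^ 10 + 33745140 * s ^ 11
      + 1467180 * s ^ 12 := by
    positivity
  have hD : (0 : ℝ) < 1126125 * ((s + 1) * (s + 2) ^ 14) * (6 * (s + 1) * (s + 2) + 6 / 5)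
      * (6 * (s + 2) * (s + 3) + 6 / 5) := by
    positivity
  refine sub_pos.1 ((div_pos hN hD).trans_eq ?_)
  rw [show (1 : ℝ) - 1 / (s + 1 + 1) = (s + 1) / (s + 2) by field_simp; ring]
  simp only [lowerApprox, sum_range_succ, sum_range_zero]
  push_cast
  field_simp
  ring

lemma sub_lt_upperApprox_sub {y : ℝ} (hy : 1 ≤ y) :
    ∑ k ∈ range 7, (1 / (y + 1)) ^ (2 * k + 1) / (2 * k + 1) - 1 / (y + 1)
        + (1 / (y + 1)) ^ 15 / (1 - 1 / (y + 1))
      < upperApprox (y * (y + 1)) - upperApprox ((y + 1) * (y + 2)) := by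
  obtain ⟨s, hs, rfl⟩ : ∃ s, 0 ≤ s ∧ y = s + 1 := ⟨y - 1, by linarith, by ring⟩
  set t := (s + 1) * (s + 1 + 1)
  set t' := (s + 1 + 1) * (s + 1 + 2)
  have hA : 0 < 1050 * t ^ 2 + 210 * t - 38 := by nlinarith
  have hB : 0 < 1050 * t' ^ 2 + 210 * t' - 38 := by nlinarith
  have hN : (0 : ℝ) < 14962985403988 + 130400428982564 * s + 490970963508368 * s ^ 2
      + 1086437905710696 * s ^ 3 + 1604962376804752 * s ^ 4 + 1693405126069552 * s ^ 5
      + 1326199431813872 * s ^ 6 + 787120057574784 * s ^ 7 + 356847541911108 * s ^ 8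
      + 123169121383476 * s ^ 9 + 31882830060564 * s ^ 10 + 6003365981340 * s ^ 11
      + 777402078180 * s ^ 12 + 61978316400 * s ^ 13 + 2295493200 * s ^ 14 := by
    positivity
  have hD : (0 : ℝ) < 45045 * ((s + 1) * (s + 2) ^ 14) * (1050 * t ^ 2 + 210 * t - 38)
      * (1050 * t' ^ 2 + 210 * t' - 38) := by
    positivity
  refine sub_pos.1 ((div_pos hN hD).trans_eq ?_)
  rw [upperApprox_eq (by positivity), upperApprox_eq (by positivity),
    show (1 : ℝ) - 1 / (s + 1 + 1) = (s + 1) / (s + 2) by field_simp; ring]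
  simp only [sum_range_succ, sum_range_zero]
  push_cast
  generalize hA' : 1050 * t ^ 2 + 210 * t - 38 = A at hA ⊢
  generalize hB' : 1050 * t' ^ 2 + 210 * t' - 38 = B at hB ⊢
  field_simp
  rw [← hA', ← hB']
  ring

lemma tendsto_lowerApprox : Tendsto lowerApprox atTop (𝓝 0) :=
  Tendsto.inv_tendsto_atTop <|
    tendsto_atTop_add_const_right _ _ (tendsto_id.const_mul_atTop (by norm_num))

lemma tendsto_upperApprox : Tendsto upperApprox atTop (𝓝 0) := by
  refine Tendsto.inv_tendsto_atTop <| tendsto_atTop_mono' _ ?_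
    (tendsto_id.const_mul_atTop (by norm_num : (0 : ℝ) < 6))
  filter_upwards [eventually_ge_atTop 1] with t ht
  have : 38 / (175 * t) ≤ 38 / 175 :=
    div_le_div_of_nonneg_left (by norm_num) (by norm_num) (by linarith)
  simp only [id]
  linarith

lemma tendsto_natCast_mul_succ : Tendsto (fun n : ℕ => (n : ℝ) * (n + 1)) atTop atTop :=
  tendsto_natCast_atTop_atTop.atTop_mul_atTop₀
    (tendsto_atTop_add_const_right _ _ tendsto_natCast_atTop_atTop)

lemma lt_of_tendsto_of_succ_lt {α : Type*} [TopologicalSpace α] [LinearOrder α]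
    [OrderClosedTopology α] {g : ℕ → α} {a : α} (hg : Tendsto g atTop (𝓝 a))
    (hdec : ∀ m, 1 ≤ m → g (m + 1) < g m) {n : ℕ} (hn : 1 ≤ n) : a < g n := by
  have hanti : Antitone fun k => g (k + 1) :=
    antitone_nat_of_succ_le fun k => (hdec (k + 1) (by omega)).le
  exact (hanti.le_of_tendsto ((tendsto_add_atTop_iff_nat 1).2 hg) n).trans_lt (hdec n hn)

lemma natCast_succ_mul_succ (m : ℕ) :
    ((m + 1 : ℕ) : ℝ) * ((m + 1 : ℕ) + 1) = ((m : ℝ) + 1) * (m + 2) := by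
  push_cast; ring

lemma lowerApprox_lt_harmonicDefect {n : ℕ} (hn : 1 ≤ n) :
    lowerApprox (n * (n + 1)) < harmonicDefect n := by
  refine sub_pos.1 (lt_of_tendsto_of_succ_lt
    (g := fun m => harmonicDefect m - lowerApprox (m * (m + 1)))
    (by simpa using tendsto_harmonicDefect.sub (tendsto_lowerApprox.comp tendsto_natCast_mul_succ))
    (fun m hm => ?_) hn)
  have h := abs_le.1 (abs_harmonicDefect_sub_succ_sub_sum_le hm)
  have hc := lowerApprox_sub_lt (y := m) (by exact_mod_cast hm)
  simp only [natCast_succ_mul_succ]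
  linarith [h.1]

lemma harmonicDefect_lt_upperApprox {n : ℕ} (hn : 1 ≤ n) :
    harmonicDefect n < upperApprox (n * (n + 1)) := by
  refine sub_pos.1 (lt_of_tendsto_of_succ_lt
    (g := fun m => upperApprox (m * (m + 1)) - harmonicDefect m)
    (by simpa using (tendsto_upperApprox.comp tendsto_natCast_mul_succ).sub tendsto_harmonicDefect)
    (fun m hm => ?_) hn)
  have h := abs_le.1 (abs_harmonicDefect_sub_succ_sub_sum_le hm)
  have hc := sub_lt_upperApprox_sub (y := m) (by exact_mod_cast hm)
  simp only [natCast_succ_mul_succ]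
  linarith [h.2]

theorem stmt18 (n : ℕ) (hn : 1 ≤ n) :
    0 < 6 / 5 - (1 / (H n - (1 / 2) * Real.log (n * (n + 1)) - Real.eulerMascheroniConstant) - 6 * n * (n + 1)) ∧
    6 / 5 - (1 / (H n - (1 / 2) * Real.log (n * (n + 1)) - Real.eulerMascheroniConstant) - 6 * n * (n + 1))
      < 38 / (175 * n * (n + 1)) := by
  change 0 < 6 / 5 - (1 / harmonicDefect n - 6 * n * (n + 1)) ∧
    6 / 5 - (1 / harmonicDefect n - 6 * n * (n + 1)) < 38 / (175 * n * (n + 1))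
  have hL := lowerApprox_lt_harmonicDefect hn
  have hU := harmonicDefect_lt_upperApprox hn
  have hn' : (1 : ℝ) ≤ n := by exact_mod_cast hn
  set t : ℝ := n * (n + 1)
  have ht2 : 2 ≤ t := by nlinarith
  have hf : 0 < harmonicDefect n := (inv_pos.2 (by positivity)).trans hL
  have hinv_lt : 1 / harmonicDefect n < 6 * t + 6 / 5 := by
    rw [one_div]; exact inv_lt_of_inv_lt₀ (by positivity) hL
  have lt_hinv : 6 * t + 6 / 5 - 38 / (175 * t) < 1 / harmonicDefect n := by
    rw [one_div]; exact lt_inv_of_lt_inv₀ hf hU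
  rw [show 175 * (n : ℝ) * (n + 1) = 175 * t by ring]
  constructor <;> linarith
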